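/- Let X = I + B where I is binomial(n, q) and B is binomial(n, r) (each of I, B binomially distributed, not necessarily independent), and let p, g ∈ [0,1] with p > g + r and suppose q < g. Then for every real x with 1 < x < (p−g)/r: P(X/n ≥ p) ≤ 1/x + 1/(4n(p − g − x·r)²). -/
import Mathlib


open MeasureTheory

section AuxStmt16
open Finset

open MeasureTheory Finset

private lemma pk_nonneg (n k : ℕ) (q : ℝ) (h0 : 0 ≤ q) (h1 : q ≤ 1) :
    0 ≤ (n.choose k : ℝ) * q ^ k * (1 - q) ^ (n - k) := by
  apply mul_nonneg (mul_nonneg (by positivity) (by positivity))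
  exact pow_nonneg (by linarith) _

private lemma key_bound {Ω : Type*} [MeasurableSpace Ω] (μ : Measure Ω)
    (n : ℕ) (q : ℝ) (h0 : 0 ≤ q) (h1 : q ≤ 1) (F : Ω → ℕ)
    (hF : ∀ k : ℕ, μ {ω | F ω = k}
      = ENNReal.ofReal ((n.choose k : ℝ) * q ^ k * (1 - q) ^ (n - k)))
    (P : ℕ → Prop) [DecidablePred P] (w : ℕ → ℝ)
    (hw0 : ∀ k, 0 ≤ w k) (hw1 : ∀ k, P k → 1 ≤ w k) :
    μ {ω | P (F ω)}
      ≤ ENNReal.ofReal (∑ k ∈ range (n+1),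
          w k * ((n.choose k : ℝ) * q ^ k * (1 - q) ^ (n - k))) := by
  set pk : ℕ → ℝ := fun k => (n.choose k : ℝ) * q ^ k * (1 - q) ^ (n - k) with hpk
  have hsub : {ω | P (F ω)} ⊆ ⋃ k : ℕ, {ω | F ω = k ∧ P k} := by
    intro ω hω
    exact Set.mem_iUnion.2 ⟨F ω, rfl, hω⟩
  calc μ {ω | P (F ω)} ≤ μ (⋃ k : ℕ, {ω | F ω = k ∧ P k}) := measure_mono hsub
    _ ≤ ∑' k : ℕ, μ {ω | F ω = k ∧ P k} := measure_iUnion_le _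
    _ ≤ ∑' k : ℕ, ENNReal.ofReal (w k * pk k) := by
        apply ENNReal.tsum_le_tsum
        intro k
        by_cases hk : P k
        · have : {ω | F ω = k ∧ P k} = {ω | F ω = k} := by
            ext ω; simp [hk]
          rw [this, hF k]
          exact ENNReal.ofReal_le_ofReal (le_mul_of_one_le_left
            (pk_nonneg n k q h0 h1) (hw1 k hk))
        · have : {ω | F ω = k ∧ P k} = ∅ := by
            ext ω; simp [hk]
          simp [this]
    _ = ∑ k ∈ range (n+1), ENNReal.ofReal (w k * pk k) := by
        apply tsum_eq_sum
        intro k hk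
        have : n.choose k = 0 := Nat.choose_eq_zero_of_lt (by simpa using hk)
        simp [hpk, this]
    _ = ENNReal.ofReal (∑ k ∈ range (n+1), w k * pk k) := by
        rw [ENNReal.ofReal_sum_of_nonneg]
        intro k _
        exact mul_nonneg (hw0 k) (pk_nonneg n k q h0 h1)

private lemma mean_sum (n : ℕ) (q : ℝ) :
    ∑ k ∈ range (n+1), (k : ℝ) * ((n.choose k : ℝ) * q ^ k * (1 - q) ^ (n - k)) = n * q := by
  have h := congrArg (Polynomial.eval q) (bernsteinPolynomial.sum_smul ℝ n)
  simpa [bernsteinPolynomial, Polynomial.eval_finset_sum, mul_assoc] using h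

private lemma var_sum (n : ℕ) (q : ℝ) :
    ∑ k ∈ range (n+1), (n * q - (k:ℝ))^2 * ((n.choose k : ℝ) * q ^ k * (1 - q) ^ (n - k))
      = n * q * (1 - q) := by
  have h := congrArg (Polynomial.eval q) (bernsteinPolynomial.variance ℝ n)
  simpa [bernsteinPolynomial, Polynomial.eval_finset_sum, mul_assoc] using h

private lemma markov {Ω : Type*} [MeasurableSpace Ω] (μ : Measure Ω)
    (n : ℕ) (r : ℝ) (h0 : 0 ≤ r) (h1 : r ≤ 1) (B : Ω → ℕ)
    (hB : ∀ k : ℕ, μ {ω | B ω = k}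
      = ENNReal.ofReal ((n.choose k : ℝ) * r ^ k * (1 - r) ^ (n - k)))
    (c : ℝ) (hc : 0 < c) :
    μ {ω | c ≤ (B ω : ℝ)} ≤ ENNReal.ofReal (n * r / c) := by
  have := key_bound μ n r h0 h1 B hB (fun k => c ≤ (k:ℝ)) (fun k => (k:ℝ)/c)
    (fun k => by positivity) (fun k hk => (one_le_div hc).2 hk)
  refine this.trans (le_of_eq (congrArg _ ?_))
  rw [← mean_sum n r, Finset.sum_div]
  exact Finset.sum_congr rfl fun k _ => by ring

private lemma chebyshev {Ω : Type*} [MeasurableSpace Ω] (μ : Measure Ω)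
    (n : ℕ) (q : ℝ) (h0 : 0 ≤ q) (h1 : q ≤ 1) (I : Ω → ℕ)
    (hI : ∀ k : ℕ, μ {ω | I ω = k}
      = ENNReal.ofReal ((n.choose k : ℝ) * q ^ k * (1 - q) ^ (n - k)))
    (a : ℝ) (ha : 0 < a) :
    μ {ω | a ≤ |(I ω : ℝ) - n * q|} ≤ ENNReal.ofReal (n * q * (1 - q) / a^2) := by
  have := key_bound μ n q h0 h1 I hI (fun k => a ≤ |(k:ℝ) - n * q|)
    (fun k => ((n * q - (k:ℝ))/a)^2) (fun k => by positivity)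
    (fun k hk => by
      show (1:ℝ) ≤ ((n * q - (k:ℝ))/a)^2
      rw [div_pow, one_le_div (by positivity)]
      have : a^2 ≤ |(k:ℝ) - n*q|^2 := by
        apply pow_le_pow_left₀ ha.le hk 2
      calc a^2 ≤ |(k:ℝ) - n*q|^2 := this
        _ = (n*q - (k:ℝ))^2 := by rw [sq_abs]; ring)
  refine this.trans (le_of_eq (congrArg _ ?_))
  rw [← var_sum n q, Finset.sum_div]
  exact Finset.sum_congr rfl fun k _ => by ring
end AuxStmt16

/-- Lemma 6 of the paper: for `X = I + B` with `I` binomial `(n,q)` and `B` binomial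
`(n,r)` (not necessarily independent), if `q < g` and `p > g + r`, then for every
`x` with `1 < x < (p-g)/r`, `P(X/n ≥ p) ≤ 1/x + 1/(4n(p-g-xr)²)`. -/
theorem stmt_16 {Ω : Type*} [MeasurableSpace Ω] (μ : Measure Ω) [IsProbabilityMeasure μ]
    (n : ℕ) (q r : ℝ) (hq : q ∈ Set.Icc (0:ℝ) 1) (hr : r ∈ Set.Icc (0:ℝ) 1)
    (I B : Ω → ℕ)
    (hI : ∀ k : ℕ, μ {ω | I ω = k}
      = ENNReal.ofReal ((n.choose k : ℝ) * q ^ k * (1 - q) ^ (n - k)))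
    (hB : ∀ k : ℕ, μ {ω | B ω = k}
      = ENNReal.ofReal ((n.choose k : ℝ) * r ^ k * (1 - r) ^ (n - k)))
    (p g : ℝ) (hp : p ∈ Set.Icc (0:ℝ) 1) (hg : g ∈ Set.Icc (0:ℝ) 1)
    (hpgr : g + r < p) (hqg : q < g)
    (x : ℝ) (hx1 : 1 < x) (hx2 : x < (p - g) / r) :
    μ {ω | p ≤ ((I ω + B ω : ℕ) : ℝ) / n}
      ≤ ENNReal.ofReal (1 / x + 1 / (4 * n * (p - g - x * r) ^ 2)) := by
  have hp0 : 0 < p := lt_of_le_of_lt (by linarith [hg.1, hr.1]) hpgr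
  by_cases hn : n = 0
  · subst hn
    have : {ω | p ≤ ((I ω + B ω : ℕ) : ℝ) / (0:ℕ)} = ∅ := by
      ext ω; simp; linarith
    rw [this]; simp
  have hn0 : 0 < (n:ℝ) := by positivity
  have hr0 : 0 < r := by
    rcases hr.1.lt_or_eq with h | h
    · exact h
    · exfalso; rw [← h, div_zero] at hx2; linarith
  have hpgx : 0 < p - g - x * r := by
    have := (lt_div_iff₀ hr0).1 hx2; linarith
  set c := x * ((n:ℝ) * r) with hc
  set a := (n:ℝ) * (p - g - x * r) with ha
  have hcpos : 0 < c := by positivity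
  have hapos : 0 < a := by positivity
  have hsub : {ω | p ≤ ((I ω + B ω : ℕ) : ℝ) / n}
      ⊆ {ω | c ≤ (B ω : ℝ)} ∪ {ω | a ≤ |(I ω : ℝ) - n * q|} := by
    intro ω hω
    by_cases hBc : c ≤ (B ω : ℝ)
    · exact Or.inl hBc
    · right
      push_neg at hBc
      have hnp : (n:ℝ) * p ≤ (I ω : ℝ) + (B ω : ℝ) := by
        have := (le_div_iff₀ hn0).1 hω
        push_cast at this ⊢
        linarith
      have hqn : (n:ℝ) * q < (n:ℝ) * g := by
        exact mul_lt_mul_of_pos_left hqg hn0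
      have : a ≤ (I ω : ℝ) - n * q := by
        rw [ha, hc] at *
        nlinarith
      exact le_trans this (le_abs_self _)
  have h1 := markov μ n r hr.1 hr.2 B hB c hcpos
  have h2 := chebyshev μ n q hq.1 hq.2 I hI a hapos
  have e1 : (n:ℝ) * r / c = 1 / x := by
    rw [hc]; field_simp
  have e2 : (n:ℝ) * q * (1 - q) / a ^ 2 ≤ 1 / (4 * n * (p - g - x * r) ^ 2) := by
    rw [ha, div_le_div_iff₀ (by positivity) (by positivity)]
    have key : (q * (1 - q)) * ((n:ℝ)^2 * (p - g - x*r)^2)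
        ≤ (1/4) * ((n:ℝ)^2 * (p - g - x*r)^2) :=
      mul_le_mul_of_nonneg_right (by nlinarith [sq_nonneg (1 - 2*q)]) (by positivity)
    nlinarith [key]
  calc μ {ω | p ≤ ((I ω + B ω : ℕ) : ℝ) / n}
      ≤ μ ({ω | c ≤ (B ω : ℝ)} ∪ {ω | a ≤ |(I ω : ℝ) - n * q|}) := measure_mono hsub
    _ ≤ μ {ω | c ≤ (B ω : ℝ)} + μ {ω | a ≤ |(I ω : ℝ) - n * q|} := measure_union_le _ _
    _ ≤ ENNReal.ofReal ((n:ℝ) * r / c) + ENNReal.ofReal ((n:ℝ) * q * (1-q) / a ^ 2) :=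
        add_le_add h1 h2
    _ ≤ ENNReal.ofReal (1 / x) + ENNReal.ofReal (1 / (4 * n * (p - g - x * r) ^ 2)) := by
        rw [e1]
        exact add_le_add le_rfl (ENNReal.ofReal_le_ofReal e2)
    _ = ENNReal.ofReal (1 / x + 1 / (4 * n * (p - g - x * r) ^ 2)) := by
        rw [← ENNReal.ofReal_add (by positivity) (by positivity)]
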